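/- arXiv:1709.06349 — 2 statements merged into one kernel-verified Lean document; each statement's English description precedes it below -/
import Mathlib

section
/- Let G' be a bi-coloured multigraph containing distinct vertices x, y, z with edges (xy,b), (xy,r), (yz,b), (yz,r) and with (xz,r) not an edge of G', and let G be obtained from G' by a K₂⊔K₂ substitution on x, y, z. Then G is (2,2)-tight and (2,3)-limited if and only if G' is (2,2)-tight and (2,3)-limited. -/
open scoped BigOperators

noncomputable section

/-- The two edge colours: `b` (blue) and `r` (red). -/
inductive Col : Type
  | b : Col
  | r : Col
  deriving DecidableEq

/-- A bi-coloured multigraph on a finite vertex set: each colour class is a set of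
unordered pairs of distinct vertices (so each monochrome subgraph is a simple graph). -/
structure BiGraph (α : Type) [DecidableEq α] : Type where
  verts : Finset α
  edges : Col → Finset (Sym2 α)
  valid : ∀ c, ∀ e ∈ edges c, ¬ e.IsDiag ∧ ∀ x ∈ e, x ∈ verts

namespace BiGraph

variable {α : Type} [DecidableEq α]

/-- The number of edges (blue and red edges counted separately). -/
def edgeCount (G : BiGraph α) : ℕ :=
  (G.edges Col.b).card + (G.edges Col.r).card

def IsSubgraph (H G : BiGraph α) : Prop :=
  H.verts ⊆ G.verts ∧ ∀ c, H.edges c ⊆ G.edges c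

def ProperSubgraph (H G : BiGraph α) : Prop :=
  H.IsSubgraph G ∧ (H.verts ≠ G.verts ∨ ∃ c, H.edges c ≠ G.edges c)

/-- `(2,k)`-sparsity: every subgraph with at least one edge satisfies `|E| ≤ 2|V| - k`. -/
def Sparse (G : BiGraph α) (k : ℤ) : Prop :=
  ∀ H : BiGraph α, H.IsSubgraph G → 0 < H.edgeCount →
    (H.edgeCount : ℤ) ≤ 2 * (H.verts.card : ℤ) - k

/-- `(2,k)`-tightness. -/
def Tight (G : BiGraph α) (k : ℤ) : Prop :=
  G.Sparse k ∧ (G.edgeCount : ℤ) = 2 * (G.verts.card : ℤ) - k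

/-- `f(G) = 2|V| - |E|`. -/
def fcount (G : BiGraph α) : ℤ :=
  2 * (G.verts.card : ℤ) - (G.edgeCount : ℤ)

/-- `(2,3)`-limited: every purely blue subgraph is `(2,3)`-sparse. -/
def Limited23 (G : BiGraph α) : Prop :=
  ∀ H : BiGraph α, H.IsSubgraph G → H.edges Col.r = ∅ → 0 < H.edgeCount →
    (H.edgeCount : ℤ) ≤ 2 * (H.verts.card : ℤ) - 3

/-- A `(2,3)`-circuit. -/
def IsCircuit23 (G : BiGraph α) : Prop :=
  (G.edgeCount : ℤ) = 2 * (G.verts.card : ℤ) - 2 ∧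
  ∀ H : BiGraph α, H.ProperSubgraph G → 0 < H.edgeCount →
    (H.edgeCount : ℤ) ≤ 2 * (H.verts.card : ℤ) - 3

/-- Delete the edge `e₀` of colour `c`. -/
def deleteEdge (G : BiGraph α) (c : Col) (e₀ : Sym2 α) : BiGraph α where
  verts := G.verts
  edges := fun d => if d = c then (G.edges d).erase e₀ else G.edges d
  valid := by
    intro d e he
    try simp only at he
    by_cases h : d = c
    · rw [if_pos h] at he
      exact G.valid d e (Finset.mem_of_mem_erase he)
    · rw [if_neg h] at he
      exact G.valid d e he

/-- The complete bi-coloured multigraph on a vertex set: one blue and one red edge on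
each pair of distinct vertices. -/
def complete (Vs : Finset α) : BiGraph α where
  verts := Vs
  edges := fun _ => Vs.sym2.filter (fun e => ¬ e.IsDiag)
  valid := by
    intro c e he
    rw [Finset.mem_filter] at he
    exact ⟨he.2, fun x hx => Finset.mem_sym2_iff.mp he.1 x hx⟩

/-- The degree of a vertex (edges of both colours counted). -/
def degree (G : BiGraph α) (v : α) : ℕ :=
  ((G.edges Col.b).filter (fun e => v ∈ e)).card +
    ((G.edges Col.r).filter (fun e => v ∈ e)).card

/-- `G` is a single vertex with no edges. -/
def IsK1 (G : BiGraph α) : Prop :=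
  (∃ v, G.verts = {v}) ∧ ∀ c, G.edges c = ∅

/-- `G` is a bi-coloured `K₄` (each pair of the four vertices joined by exactly one
edge) with at least 5 edges of the same colour. -/
def IsK4Base (G : BiGraph α) : Prop :=
  G.verts.card = 4 ∧
  G.edges Col.b ∪ G.edges Col.r = G.verts.sym2.filter (fun e => ¬ e.IsDiag) ∧
  Disjoint (G.edges Col.b) (G.edges Col.r) ∧
  (5 ≤ (G.edges Col.b).card ∨ 5 ≤ (G.edges Col.r).card)

/-- 0-extension: add a new vertex `v` of degree 2, either joined to two distinct
existing vertices by edges of arbitrary colours, or joined to a single existing vertex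
by one blue and one red edge. -/
def ZeroExt (G G' : BiGraph α) : Prop :=
  ∃ v, v ∉ G.verts ∧ G'.verts = insert v G.verts ∧
    ((∃ x y c₁ c₂, x ∈ G.verts ∧ y ∈ G.verts ∧ x ≠ y ∧
        ∀ d, G'.edges d = G.edges d ∪
          ((if d = c₁ then {s(x, v)} else ∅) ∪ (if d = c₂ then {s(y, v)} else ∅))) ∨
     (∃ x, x ∈ G.verts ∧ ∀ d, G'.edges d = insert s(x, v) (G.edges d)))

/-- 1-extension with explicit data: delete the edge `s(x,y)` of colour `c`, add a new
vertex `v` with replacement edges `(xv, c₂)`, `(yv, c₃)` and a third edge `(zv, c₄)`;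
`z` may equal `x` or `y` provided the resulting parallel edges at `v` have distinct
colours. The colour case is `c → {c₂, c₃}`. -/
def OneExtOn (G G' : BiGraph α) (c c₂ c₃ : Col) (x y z v : α) : Prop :=
  x ≠ y ∧ x ∈ G.verts ∧ y ∈ G.verts ∧ z ∈ G.verts ∧ v ∉ G.verts ∧
  s(x, y) ∈ G.edges c ∧
  ∃ c₄ : Col, (z = x → c₄ ≠ c₂) ∧ (z = y → c₄ ≠ c₃) ∧
    G'.verts = insert v G.verts ∧
    ∀ d, G'.edges d =
      ((if d = c then (G.edges d).erase s(x, y) else G.edges d)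
        ∪ (if d = c₂ then {s(x, v)} else ∅))
        ∪ ((if d = c₃ then {s(y, v)} else ∅)
        ∪ (if d = c₄ then {s(z, v)} else ∅))

def OneExt (G G' : BiGraph α) (c c₂ c₃ : Col) : Prop :=
  ∃ x y z v, OneExtOn G G' c c₂ c₃ x y z v

/-- Colour-restricted 1-extension: the deleted edge and both replacement edges have the
same colour, and the new vertex has three distinct neighbours. -/
def ColRes1Ext (G G' : BiGraph α) : Prop :=
  ∃ c x y z v, z ≠ x ∧ z ≠ y ∧ OneExtOn G G' c c c x y z v

/-- Colour-restricted vertex split on an edge of colour `c`: the vertex `v` is split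
into `v` and `w`, the chosen neighbour `x` (with `(xv,c) ∈ E`) becomes joined to both,
the edge `(vw, c)` is added, and every other edge at `v` goes to `v` or to `w`. -/
def ColResVSplitC (G G' : BiGraph α) (c : Col) : Prop :=
  ∃ (v w x : α) (T : Col → Finset (Sym2 α)),
    v ∈ G.verts ∧ w ∉ G.verts ∧ s(x, v) ∈ G.edges c ∧
    (∀ d, T d ⊆ (G.edges d).filter (fun e => v ∈ e)) ∧ s(x, v) ∉ T c ∧
    G'.verts = insert w G.verts ∧
    ∀ d, G'.edges d =
      ((G.edges d \ T d) ∪ (T d).image (Sym2.map (fun u => if u = v then w else u)))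
        ∪ (if d = c then {s(x, w), s(v, w)} else ∅)

def ColResVSplit (G G' : BiGraph α) : Prop :=
  ∃ c, ColResVSplitC G G' c

/-- Graph extension: `G` is obtained from `G₀` by deleting the vertex `v`, adding a
disjoint copy of `H` (with `f(H) = 2`), and replacing each edge `(xv, c)` of `G₀` by an
edge `(x, m c x)` of colour `c` with `m c x` a vertex of `H`. -/
def GraphExt (G₀ G H : BiGraph α) (v : α) : Prop :=
  v ∈ G₀.verts ∧ Disjoint H.verts G₀.verts ∧ H.fcount = 2 ∧
  G.verts = (G₀.verts.erase v) ∪ H.verts ∧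
  ∃ m : Col → α → α, (∀ d x, m d x ∈ H.verts) ∧
    ∀ d, G.edges d =
      (((G₀.edges d).filter (fun e => v ∉ e)) ∪ H.edges d) ∪
        (((G₀.verts.erase v).filter (fun x => s(x, v) ∈ G₀.edges d)).image
          (fun x => s(x, m d x)))

/-- `K₂ ⊔ K₂` substitution: in `G'` the vertices `x, y, z` carry the four edges
`(xy,b), (xy,r), (yz,b), (yz,r)` and `(xz,r)` is not an edge; `G` is obtained by
deleting the two blue edges, adding a new vertex `v` and the red edges
`(xz,r), (xv,r), (yv,r), (zv,r)`, so that `x, y, z, v` span a red `K₄`. -/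
def K2SubstOn (G' G : BiGraph α) (x y z v : α) : Prop :=
  x ≠ y ∧ y ≠ z ∧ x ≠ z ∧
  x ∈ G'.verts ∧ y ∈ G'.verts ∧ z ∈ G'.verts ∧ v ∉ G'.verts ∧
  s(x, y) ∈ G'.edges Col.b ∧ s(x, y) ∈ G'.edges Col.r ∧
  s(y, z) ∈ G'.edges Col.b ∧ s(y, z) ∈ G'.edges Col.r ∧
  s(x, z) ∉ G'.edges Col.r ∧
  G.verts = insert v G'.verts ∧
  G.edges Col.b = ((G'.edges Col.b).erase s(x, y)).erase s(y, z) ∧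
  G.edges Col.r =
    insert s(x, z) (insert s(x, v) (insert s(y, v) (insert s(z, v) (G'.edges Col.r))))

end BiGraph

/-! The substitution adds one vertex and two edges, so it preserves `f = 2|V| - |E|`, and it
restricts to every subgraph containing its gadget: the doubled path `x y z` on the side of `G'`,
the red `K₄` on `x, y, z, v` on the side of `G`. A subgraph `H` avoiding the edges of the gadget
`K` is already a subgraph of the other graph, up to the vertex `v`. Otherwise
`f(H) = f(H ∪ K) + f(H ∩ K) - f(K)` with `f(K) = 2`: the bound on `f(H ∪ K)` transfers across
the substitution, and `H ∩ K` is a nonempty subgraph of a gadget, where `f ≥ 2`, and `f ≥ 3`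
when it has no red edge. -/

theorem Finset.card_sym2_filter_not_isDiag {α : Type} [DecidableEq α] (s : Finset α) :
    (s.sym2.filter (fun e => ¬ e.IsDiag)).card = s.card.choose 2 := by
  rw [Finset.sym2_eq_image, Sym2.filter_image_mk_not_isDiag, Sym2.card_image_offDiag]

namespace BiGraph

variable {α : Type} [DecidableEq α]

section Counting

variable {G H K : BiGraph α}

theorem notMem_of_mem_edges {c : Col} {e : Sym2 α} {v : α} (he : e ∈ G.edges c)
    (hv : v ∉ G.verts) : v ∉ e :=
  fun hve => hv ((G.valid c e he).2 v hve)

theorem edgeCount_pos_of_mem {c : Col} {e : Sym2 α} (he : e ∈ G.edges c) : 0 < G.edgeCount := by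
  have := Finset.card_pos.mpr ⟨e, he⟩
  cases c <;> simp only [edgeCount] <;> omega

theorem card_edges_le_choose_two (G : BiGraph α) (c : Col) :
    (G.edges c).card ≤ G.verts.card.choose 2 := by
  rw [← Finset.card_sym2_filter_not_isDiag]
  refine Finset.card_le_card fun e he => Finset.mem_filter.mpr ⟨?_, (G.valid c e he).1⟩
  exact Finset.mem_sym2_iff.mpr (G.valid c e he).2

theorem two_le_card_verts (hpos : 0 < G.edgeCount) : 2 ≤ G.verts.card := by
  obtain ⟨c, e, he⟩ : ∃ c, ∃ e, e ∈ G.edges c := by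
    by_contra! h
    simp [edgeCount, Finset.eq_empty_of_forall_notMem (h _)] at hpos
  rw [← Sym2.card_toFinset_of_not_isDiag e (G.valid c e he).1]
  exact Finset.card_le_card fun t ht => (G.valid c e he).2 t (Sym2.mem_toFinset.mp ht)

def union (H K : BiGraph α) : BiGraph α where
  verts := H.verts ∪ K.verts
  edges c := H.edges c ∪ K.edges c
  valid c e he := by
    rcases Finset.mem_union.mp he with h | h
    · exact ⟨(H.valid c e h).1, fun t ht => Finset.mem_union_left _ ((H.valid c e h).2 t ht)⟩
    · exact ⟨(K.valid c e h).1, fun t ht => Finset.mem_union_right _ ((K.valid c e h).2 t ht)⟩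

def inter (H K : BiGraph α) : BiGraph α where
  verts := H.verts ∩ K.verts
  edges c := H.edges c ∩ K.edges c
  valid c e he := by
    obtain ⟨hH, hK⟩ := Finset.mem_inter.mp he
    exact ⟨(H.valid c e hH).1, fun t ht =>
      Finset.mem_inter.mpr ⟨(H.valid c e hH).2 t ht, (K.valid c e hK).2 t ht⟩⟩

theorem fcount_union_add_fcount_inter (H K : BiGraph α) :
    (H.union K).fcount + (H.inter K).fcount = H.fcount + K.fcount := by
  have hV := Finset.card_union_add_card_inter H.verts K.verts
  have hb := Finset.card_union_add_card_inter (H.edges Col.b) (K.edges Col.b)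
  have hr := Finset.card_union_add_card_inter (H.edges Col.r) (K.edges Col.r)
  simp only [fcount, edgeCount, union, inter]
  omega

theorem IsSubgraph.union (hH : H.IsSubgraph G) (hK : K.IsSubgraph G) :
    (H.union K).IsSubgraph G :=
  ⟨Finset.union_subset hH.1 hK.1, fun c => Finset.union_subset (hH.2 c) (hK.2 c)⟩

theorem isSubgraph_union_right (H K : BiGraph α) : K.IsSubgraph (H.union K) :=
  ⟨Finset.subset_union_right, fun _ => Finset.subset_union_right⟩

theorem inter_isSubgraph_right (H K : BiGraph α) : (H.inter K).IsSubgraph K :=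
  ⟨Finset.inter_subset_right, fun _ => Finset.inter_subset_right⟩

theorem exists_isSubgraph_of_edges_subset (W : Finset α) (E : Col → Finset (Sym2 α))
    (hE : ∀ c, E c ⊆ G.edges c) (hW : ∀ c, ∀ e ∈ E c, ∀ t ∈ e, t ∈ W) :
    ∃ H : BiGraph α, H.IsSubgraph G ∧ H.verts = W ∩ G.verts ∧ ∀ c, H.edges c = E c :=
  ⟨⟨W ∩ G.verts, E, fun c e he => ⟨(G.valid c e (hE c he)).1, fun t ht =>
    Finset.mem_inter.mpr ⟨hW c e he t ht, (G.valid c e (hE c he)).2 t ht⟩⟩⟩,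
    ⟨Finset.inter_subset_right, hE⟩, rfl, fun _ => rfl⟩

theorem exists_isSubgraph_fcount_le (hE : ∀ c, H.edges c ⊆ G.edges c) :
    ∃ H' : BiGraph α, H'.IsSubgraph G ∧ (∀ c, H'.edges c = H.edges c) ∧
      H'.fcount ≤ H.fcount := by
  have hedges : ∀ c, (H.inter G).edges c = H.edges c := fun c => Finset.inter_eq_left.mpr (hE c)
  refine ⟨H.inter G, inter_isSubgraph_right H G, hedges, ?_⟩
  have hV := Finset.card_le_card (Finset.inter_subset_left : H.verts ∩ G.verts ⊆ H.verts)
  simp only [fcount, edgeCount, hedges]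
  simp only [inter] at hV ⊢
  omega

theorem Sparse.le_fcount {k : ℤ} (hG : G.Sparse k) (hE : ∀ c, H.edges c ⊆ G.edges c)
    (hpos : 0 < H.edgeCount) : k ≤ H.fcount := by
  obtain ⟨H', hH', hedges, hf⟩ := exists_isSubgraph_fcount_le hE
  have hcount : H'.edgeCount = H.edgeCount := by simp only [edgeCount, hedges]
  have := hG H' hH' (hcount ▸ hpos)
  simp only [fcount] at hf ⊢
  omega

theorem sparse_of_le_fcount {k : ℤ}
    (h : ∀ H : BiGraph α, H.IsSubgraph G → 0 < H.edgeCount → k ≤ H.fcount) : G.Sparse k :=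
  fun H hH hpos => by have := h H hH hpos; simp only [fcount] at this; omega

theorem Limited23.three_le_fcount (hG : G.Limited23) (hE : ∀ c, H.edges c ⊆ G.edges c)
    (hr : H.edges Col.r = ∅) (hpos : 0 < H.edgeCount) : 3 ≤ H.fcount := by
  obtain ⟨H', hH', hedges, hf⟩ := exists_isSubgraph_fcount_le hE
  have hcount : H'.edgeCount = H.edgeCount := by simp only [edgeCount, hedges]
  have := hG H' hH' (hedges Col.r ▸ hr) (hcount ▸ hpos)
  simp only [fcount] at hf ⊢
  omega

theorem limited23_of_three_le_fcount
    (h : ∀ H : BiGraph α, H.IsSubgraph G → H.edges Col.r = ∅ → 0 < H.edgeCount →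
      3 ≤ H.fcount) :
    G.Limited23 :=
  fun H hH hr hpos => by have := h H hH hr hpos; simp only [fcount] at this; omega

theorem tight_iff_sparse_and_fcount_eq {k : ℤ} : G.Tight k ↔ G.Sparse k ∧ G.fcount = k := by
  simp only [Tight, fcount]
  constructor <;> rintro ⟨h, _⟩ <;> exact ⟨h, by omega⟩

end Counting

section Gadgets

variable {H : BiGraph α}

def doubledPath (x y z : α) (hxy : x ≠ y) (hyz : y ≠ z) : BiGraph α where
  verts := {x, y, z}
  edges _ := {s(x, y), s(y, z)}
  valid _ e he := by
    simp only [Finset.mem_insert, Finset.mem_singleton] at he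
    rcases he with rfl | rfl <;> simp [hxy, hyz]

theorem fcount_doubledPath {x y z : α} (hxy : x ≠ y) (hyz : y ≠ z) (hxz : x ≠ z) :
    (doubledPath x y z hxy hyz).fcount = 2 := by
  have hV : ({x, y, z} : Finset α).card = 3 :=
    Finset.card_eq_three.mpr ⟨x, y, z, hxy, hxz, hyz, rfl⟩
  have hE : ({s(x, y), s(y, z)} : Finset (Sym2 α)).card = 2 :=
    Finset.card_pair (by simp [hxy, hxz])
  simp only [fcount, edgeCount, doubledPath, hV, hE]
  norm_num

theorem le_fcount_of_isSubgraph_doubledPath {x y z : α} {hxy : x ≠ y} {hyz : y ≠ z}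
    (hH : H.IsSubgraph (doubledPath x y z hxy hyz)) (hpos : 0 < H.edgeCount) :
    2 ≤ H.fcount ∧ (H.edges Col.r = ∅ → 3 ≤ H.fcount) := by
  have hn := two_le_card_verts hpos
  have hV : H.verts.card ≤ 3 := (Finset.card_le_card hH.1).trans Finset.card_le_three
  have hb2 := (Finset.card_le_card (hH.2 Col.b)).trans Finset.card_le_two
  have hr2 := (Finset.card_le_card (hH.2 Col.r)).trans Finset.card_le_two
  have hb := H.card_edges_le_choose_two Col.b
  have hr := H.card_edges_le_choose_two Col.r
  simp only [fcount, edgeCount]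
  refine ⟨?_, fun hred => ?_⟩
  · interval_cases H.verts.card <;> rw [Nat.choose_two_right] at hb hr <;> omega
  · rw [hred, Finset.card_empty]
    interval_cases H.verts.card <;> rw [Nat.choose_two_right] at hb <;> omega

def monoComplete (c : Col) (S : Finset α) : BiGraph α where
  verts := S
  edges d := if d = c then S.sym2.filter (fun e => ¬ e.IsDiag) else ∅
  valid d e he := by
    split_ifs at he
    · exact ⟨(Finset.mem_filter.mp he).2, Finset.mem_sym2_iff.mp (Finset.mem_filter.mp he).1⟩
    · simp at he

theorem fcount_monoComplete (c : Col) (S : Finset α) :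
    (monoComplete c S).fcount = 2 * S.card - S.card.choose 2 := by
  cases c <;> simp [fcount, edgeCount, monoComplete, Finset.card_sym2_filter_not_isDiag]

theorem two_le_fcount_of_isSubgraph_monoComplete {c : Col} {S : Finset α} (hS : S.card ≤ 4)
    (hH : H.IsSubgraph (monoComplete c S)) (hpos : 0 < H.edgeCount) : 2 ≤ H.fcount := by
  have hn := two_le_card_verts hpos
  have hV : H.verts.card ≤ 4 := (Finset.card_le_card hH.1).trans hS
  have hc := H.card_edges_le_choose_two c
  have hother : ∀ d, d ≠ c → H.edges d = ∅ := fun d hd =>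
    Finset.subset_empty.mp (by simpa [monoComplete, hd] using hH.2 d)
  have hcount : H.edgeCount = (H.edges c).card := by
    cases c <;> simp [edgeCount, hother]
  simp only [fcount, hcount]
  interval_cases H.verts.card <;> rw [Nat.choose_two_right] at hc <;> omega

end Gadgets

def k2UnsubstEdges (E : Col → Finset (Sym2 α)) (x y z v : α) : Col → Finset (Sym2 α)
  | .b => insert s(x, y) (insert s(y, z) (E Col.b))
  | .r => ((((E Col.r).erase s(x, z)).erase s(x, v)).erase s(y, v)).erase s(z, v)

theorem exists_mem_of_mem_k2UnsubstEdges {E : Col → Finset (Sym2 α)} {x y z v : α}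
    (hxy : s(x, y) ∈ E Col.r) (hyz : s(y, z) ∈ E Col.r) {c : Col} {e : Sym2 α}
    (he : e ∈ k2UnsubstEdges E x y z v c) : ∃ d, e ∈ E d := by
  cases c
  · simp only [k2UnsubstEdges, Finset.mem_insert] at he
    rcases he with rfl | rfl | he
    exacts [⟨_, hxy⟩, ⟨_, hyz⟩, ⟨_, he⟩]
  · exact ⟨Col.r, Finset.mem_of_mem_erase (Finset.mem_of_mem_erase
      (Finset.mem_of_mem_erase (Finset.mem_of_mem_erase he)))⟩

namespace K2SubstOn

variable {G' G H : BiGraph α} {x y z v : α}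

theorem fcount_eq (h : K2SubstOn G' G x y z v) : G.fcount = G'.fcount := by
  obtain ⟨hxy, hyz, hxz, hx, hy, hz, hv, hxyb, -, hyzb, -, hxzr, hV, hEb, hEr⟩ := h
  have hxv : x ≠ v := ne_of_mem_of_not_mem hx hv
  have hyv : y ≠ v := ne_of_mem_of_not_mem hy hv
  have hzv : z ≠ v := ne_of_mem_of_not_mem hz hv
  have hvr : ∀ a, s(a, v) ∉ G'.edges Col.r := fun a ha =>
    notMem_of_mem_edges ha hv (Sym2.mem_mk_right a v)
  have cV : G.verts.card = G'.verts.card + 1 := by rw [hV, Finset.card_insert_of_notMem hv]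
  have cb : (G.edges Col.b).card + 2 = (G'.edges Col.b).card := by
    have hyz' : s(y, z) ∈ (G'.edges Col.b).erase s(x, y) :=
      Finset.mem_erase.mpr ⟨by simp [hxy.symm, hxz.symm], hyzb⟩
    rw [hEb, ← Finset.card_erase_add_one hxyb, ← Finset.card_erase_add_one hyz']
  have cr : (G.edges Col.r).card = (G'.edges Col.r).card + 4 := by
    rw [hEr, Finset.card_insert_of_notMem, Finset.card_insert_of_notMem,
      Finset.card_insert_of_notMem, Finset.card_insert_of_notMem (hvr z)]
    all_goals simp [hxz, hxy, hyz, hxv, hyv, hzv, hvr, hxzr]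
  simp only [fcount, edgeCount]
  omega

theorem edgeCount_pos_left (h : K2SubstOn G' G x y z v) : 0 < G'.edgeCount := by
  obtain ⟨-, -, -, -, -, -, -, hxyb, -⟩ := h
  exact edgeCount_pos_of_mem hxyb

theorem edgeCount_pos_right (h : K2SubstOn G' G x y z v) : 0 < G.edgeCount := by
  obtain ⟨-, -, -, -, -, -, -, -, -, -, -, -, -, -, hEr⟩ := h
  exact edgeCount_pos_of_mem (c := Col.r) (hEr ▸ Finset.mem_insert_self _ _)

theorem doubledPath_isSubgraph (h : K2SubstOn G' G x y z v) :
    (doubledPath x y z h.1 h.2.1).IsSubgraph G' := by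
  obtain ⟨-, -, -, hx, hy, hz, -, hxyb, hxyr, hyzb, hyzr, -⟩ := h
  refine ⟨by simp [doubledPath, Finset.insert_subset_iff, hx, hy, hz], fun c => ?_⟩
  cases c <;> simp [doubledPath, Finset.insert_subset_iff, *]

theorem monoComplete_isSubgraph (h : K2SubstOn G' G x y z v) :
    (monoComplete Col.r {x, y, z, v}).IsSubgraph G := by
  obtain ⟨-, -, -, hx, hy, hz, -, -, hxyr, -, hyzr, -, hV, -, hEr⟩ := h
  refine ⟨by simp [monoComplete, hV, Finset.insert_subset_iff, hx, hy, hz], fun c e he => ?_⟩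
  cases c
  · simp [monoComplete] at he
  induction e using Sym2.ind with
  | h a b =>
    simp only [monoComplete, if_true, Finset.mem_filter, Finset.mk_mem_sym2_iff,
      Sym2.mk_isDiag_iff, Finset.mem_insert, Finset.mem_singleton] at he
    obtain ⟨⟨ha | ha | ha | ha, hb | hb | hb | hb⟩, hab⟩ := he <;> subst ha hb <;>
      simp_all [Sym2.eq_swap]

theorem exists_isSubgraph_right (h : K2SubstOn G' G x y z v) {H' : BiGraph α}
    (hH' : H'.IsSubgraph G') (hK : (doubledPath x y z h.1 h.2.1).IsSubgraph H') :
    ∃ H : BiGraph α, H.IsSubgraph G ∧ K2SubstOn H' H x y z v := by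
  have hxyb : s(x, y) ∈ H'.edges Col.b := hK.2 Col.b (by simp [doubledPath])
  have hxyr : s(x, y) ∈ H'.edges Col.r := hK.2 Col.r (by simp [doubledPath])
  have hyzb : s(y, z) ∈ H'.edges Col.b := hK.2 Col.b (by simp [doubledPath])
  have hyzr : s(y, z) ∈ H'.edges Col.r := hK.2 Col.r (by simp [doubledPath])
  have hx : x ∈ H'.verts := hK.1 (by simp [doubledPath])
  have hy : y ∈ H'.verts := hK.1 (by simp [doubledPath])
  have hz : z ∈ H'.verts := hK.1 (by simp [doubledPath])
  obtain ⟨hxy, hyz, hxz, -, -, -, hv, -, -, -, -, hxzr, hV, hEb, hEr⟩ := h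
  have hvH : v ∉ H'.verts := fun hvH => hv (hH'.1 hvH)
  refine ⟨⟨insert v H'.verts, fun
      | .b => ((H'.edges Col.b).erase s(x, y)).erase s(y, z)
      | .r => insert s(x, z) (insert s(x, v) (insert s(y, v) (insert s(z, v) (H'.edges Col.r)))),
    fun c e he => ?_⟩, ⟨?_, fun c => ?_⟩,
    hxy, hyz, hxz, hx, hy, hz, hvH, hxyb, hxyr, hyzb, hyzr, fun h => hxzr (hH'.2 _ h),
    rfl, rfl, rfl⟩
  · have hinsert :
        ∀ c, ∀ e ∈ H'.edges c, ¬ e.IsDiag ∧ ∀ t ∈ e, t ∈ insert v H'.verts :=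
      fun c e he => ⟨(H'.valid c e he).1,
        fun t ht => Finset.mem_insert_of_mem ((H'.valid c e he).2 t ht)⟩
    cases c
    · exact hinsert Col.b e (Finset.mem_of_mem_erase (Finset.mem_of_mem_erase he))
    · simp only [Finset.mem_insert] at he
      rcases he with rfl | rfl | rfl | rfl | he
      · simp [hxz, hx, hz]
      · simp [ne_of_mem_of_not_mem hx hvH, hx]
      · simp [ne_of_mem_of_not_mem hy hvH, hy]
      · simp [ne_of_mem_of_not_mem hz hvH, hz]
      · exact hinsert Col.r e he
  · rw [hV]
    exact Finset.insert_subset_insert v hH'.1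
  · cases c
    · exact hEb ▸ Finset.erase_subset_erase _ (Finset.erase_subset_erase _ (hH'.2 Col.b))
    · exact hEr ▸ Finset.insert_subset_insert _ (Finset.insert_subset_insert _
        (Finset.insert_subset_insert _ (Finset.insert_subset_insert _ (hH'.2 Col.r))))

theorem edges_b_subset (h : K2SubstOn G' G x y z v) : G.edges Col.b ⊆ G'.edges Col.b := by
  obtain ⟨-, -, -, -, -, -, -, -, -, -, -, -, -, hEb, -⟩ := h
  rw [hEb]
  exact (Finset.erase_subset _ _).trans (Finset.erase_subset _ _)

theorem mem_edges_r_left (h : K2SubstOn G' G x y z v) {e : Sym2 α} (he : e ∈ G.edges Col.r)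
    (hxz : e ≠ s(x, z)) (hxv : e ≠ s(x, v)) (hyv : e ≠ s(y, v)) (hzv : e ≠ s(z, v)) :
    e ∈ G'.edges Col.r := by
  obtain ⟨-, -, -, -, -, -, -, -, -, -, -, -, -, -, hEr⟩ := h
  simpa [hEr, hxz, hxv, hyv, hzv] using he

theorem k2UnsubstEdges_subset (h : K2SubstOn G' G x y z v) (hH : H.IsSubgraph G) :
    ∀ c, k2UnsubstEdges H.edges x y z v c ⊆ G'.edges c := by
  obtain ⟨-, -, -, -, -, -, -, hxyb, -, hyzb, -⟩ := id h
  intro c e he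
  cases c
  · simp only [k2UnsubstEdges, Finset.mem_insert] at he
    rcases he with rfl | rfl | he
    exacts [hxyb, hyzb, h.edges_b_subset (hH.2 Col.b he)]
  · simp only [k2UnsubstEdges, Finset.mem_erase] at he
    exact h.mem_edges_r_left (hH.2 Col.r he.2.2.2.2) he.2.2.2.1 he.2.2.1 he.2.1 he.1

theorem exists_isSubgraph_left (h : K2SubstOn G' G x y z v) {H : BiGraph α}
    (hH : H.IsSubgraph G) (hK : (monoComplete Col.r {x, y, z, v}).IsSubgraph H) :
    ∃ H' : BiGraph α, H'.IsSubgraph G' ∧ K2SubstOn H' H x y z v := by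
  have hKr : ∀ a ∈ ({x, y, z, v} : Finset α), ∀ b ∈ ({x, y, z, v} : Finset α), a ≠ b →
      s(a, b) ∈ H.edges Col.r := fun a ha b hb hab => hK.2 Col.r (by
    simp only [monoComplete, if_true, Finset.mem_filter, Finset.mk_mem_sym2_iff,
      Sym2.mk_isDiag_iff]
    exact ⟨⟨ha, hb⟩, hab⟩)
  have hKv : ∀ a ∈ ({x, y, z, v} : Finset α), a ∈ H.verts := fun a ha => hK.1 ha
  have hEG' := h.k2UnsubstEdges_subset hH
  obtain ⟨hxy, hyz, hxz, hx, hy, hz, hv, -, -, -, -, -, hV, hEb, -⟩ := h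
  have hxv : x ≠ v := ne_of_mem_of_not_mem hx hv
  have hyv : y ≠ v := ne_of_mem_of_not_mem hy hv
  have hzv : z ≠ v := ne_of_mem_of_not_mem hz hv
  have hxyr := hKr x (by simp) y (by simp) hxy
  have hyzr := hKr y (by simp) z (by simp) hyz
  obtain ⟨H', hH', hV', hE'⟩ := exists_isSubgraph_of_edges_subset H.verts _ hEG' fun c e he =>
    have ⟨d, hd⟩ := exists_mem_of_mem_k2UnsubstEdges hxyr hyzr he
    (H.valid d e hd).2
  have hblue : s(x, y) ∉ H.edges Col.b ∧ s(y, z) ∉ H.edges Col.b := by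
    constructor <;> intro hm <;> simpa [hEb] using hH.2 Col.b hm
  refine ⟨H', hH', hxy, hyz, hxz, ?_, ?_, ?_, ?_, ?_, ?_, ?_, ?_, ?_, ?_, ?_, ?_⟩
  all_goals simp only [hV', hE', k2UnsubstEdges, Finset.mem_inter]
  · exact ⟨hKv x (by simp), hx⟩
  · exact ⟨hKv y (by simp), hy⟩
  · exact ⟨hKv z (by simp), hz⟩
  · exact fun hvG => hv hvG.2
  · exact Finset.mem_insert_self _ _
  · simp [hxy, hyz, hxz, hxv, hyv, hxy.symm, hxyr]
  · exact Finset.mem_insert_of_mem (Finset.mem_insert_self _ _)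
  · simp [hyz, hyv, hzv, hxy.symm, hyz.symm, hxz.symm, hyzr]
  · simp
  · rw [Finset.insert_inter_distrib, Finset.insert_eq_of_mem (hKv v (by simp)), ← hV,
      Finset.inter_eq_left.mpr hH.1]
  · rw [Finset.erase_insert (by simp [hxy, hxz, hblue.1]), Finset.erase_insert hblue.2]
  · rw [Finset.insert_erase, Finset.insert_erase, Finset.insert_erase, Finset.insert_erase]
    all_goals simp [hxy, hyz, hxz, hxv, hyv, hzv, hxy.symm, hyz.symm, hxz.symm, hxv.symm,
      hyv.symm, hzv.symm, hKr]

theorem card_eq_four (h : K2SubstOn G' G x y z v) : ({x, y, z, v} : Finset α).card = 4 := by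
  obtain ⟨hxy, hyz, hxz, hx, hy, hz, hv, -⟩ := h
  exact Finset.card_eq_four.mpr ⟨x, y, z, v, hxy, hxz, ne_of_mem_of_not_mem hx hv, hyz,
    ne_of_mem_of_not_mem hy hv, ne_of_mem_of_not_mem hz hv, rfl⟩

theorem edges_subset_right (h : K2SubstOn G' G x y z v) (hH : H.IsSubgraph G')
    (hI : ¬ 0 < (H.inter (doubledPath x y z h.1 h.2.1)).edgeCount) :
    ∀ c, H.edges c ⊆ G.edges c := by
  have hnot : ∀ e ∈ ({s(x, y), s(y, z)} : Finset (Sym2 α)), e ∉ H.edges Col.b :=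
    fun e he hm => hI (edgeCount_pos_of_mem (c := Col.b) (Finset.mem_inter.mpr ⟨hm, he⟩))
  obtain ⟨-, -, -, -, -, -, -, -, -, -, -, -, -, hEb, hEr⟩ := h
  intro c e he
  cases c
  · rw [hEb]
    exact Finset.mem_erase.mpr ⟨fun hyz => hnot _ (by simp) (hyz ▸ he),
      Finset.mem_erase.mpr ⟨fun hxy => hnot _ (by simp) (hxy ▸ he), hH.2 Col.b he⟩⟩
  · rw [hEr]
    simp [hH.2 Col.r he]

theorem edges_subset_left (h : K2SubstOn G' G x y z v) (hH : H.IsSubgraph G)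
    (hI : ¬ 0 < (H.inter (monoComplete Col.r {x, y, z, v})).edgeCount) :
    ∀ c, H.edges c ⊆ G'.edges c := by
  have hnot : ∀ e ∈ (monoComplete Col.r {x, y, z, v}).edges Col.r, e ∉ H.edges Col.r :=
    fun e he hm => hI (edgeCount_pos_of_mem (Finset.mem_inter.mpr ⟨hm, he⟩))
  obtain ⟨-, -, hxz, hx, hy, hz, hv, -⟩ := id h
  intro c e he
  cases c
  · exact h.edges_b_subset (hH.2 Col.b he)
  · refine h.mem_edges_r_left (hH.2 Col.r he) ?_ ?_ ?_ ?_ <;> rintro rfl <;>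
      refine hnot _ ?_ he <;>
      simp [monoComplete, hxz, ne_of_mem_of_not_mem hx hv, ne_of_mem_of_not_mem hy hv,
        ne_of_mem_of_not_mem hz hv]

theorem two_le_fcount_union_doubledPath (h : K2SubstOn G' G x y z v) (hG : G.Sparse 2)
    (hH : H.IsSubgraph G') : 2 ≤ (H.union (doubledPath x y z h.1 h.2.1)).fcount := by
  obtain ⟨U, hU, hsubU⟩ :=
    h.exists_isSubgraph_right (hH.union h.doubledPath_isSubgraph) (isSubgraph_union_right _ _)
  rw [← hsubU.fcount_eq]
  exact hG.le_fcount hU.2 hsubU.edgeCount_pos_right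

theorem two_le_fcount_union_monoComplete (h : K2SubstOn G' G x y z v) (hG' : G'.Sparse 2)
    (hH : H.IsSubgraph G) : 2 ≤ (H.union (monoComplete Col.r {x, y, z, v})).fcount := by
  obtain ⟨U', hU', hsubU⟩ :=
    h.exists_isSubgraph_left (hH.union h.monoComplete_isSubgraph) (isSubgraph_union_right _ _)
  rw [hsubU.fcount_eq]
  exact hG'.le_fcount hU'.2 hsubU.edgeCount_pos_left

theorem le_fcount_of_meets_doubledPath (h : K2SubstOn G' G x y z v) (hG : G.Sparse 2)
    (hH : H.IsSubgraph G') (hI : 0 < (H.inter (doubledPath x y z h.1 h.2.1)).edgeCount) :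
    2 ≤ H.fcount ∧ (H.edges Col.r = ∅ → 3 ≤ H.fcount) := by
  have hU := h.two_le_fcount_union_doubledPath hG hH
  have hI' := le_fcount_of_isSubgraph_doubledPath (inter_isSubgraph_right H _) hI
  have hsum := fcount_union_add_fcount_inter H (doubledPath x y z h.1 h.2.1)
  rw [fcount_doubledPath h.1 h.2.1 h.2.2.1] at hsum
  refine ⟨by omega, fun hr => ?_⟩
  have := hI'.2 (by simp [inter, hr])
  omega

theorem sparse_left (h : K2SubstOn G' G x y z v) (hG : G.Sparse 2) : G'.Sparse 2 := by
  refine sparse_of_le_fcount fun H hH hpos => ?_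
  by_cases hI : 0 < (H.inter (doubledPath x y z h.1 h.2.1)).edgeCount
  · exact (h.le_fcount_of_meets_doubledPath hG hH hI).1
  · exact hG.le_fcount (h.edges_subset_right hH hI) hpos

theorem limited23_left (h : K2SubstOn G' G x y z v) (hG : G.Sparse 2) (hGl : G.Limited23) :
    G'.Limited23 := by
  refine limited23_of_three_le_fcount fun H hH hr hpos => ?_
  by_cases hI : 0 < (H.inter (doubledPath x y z h.1 h.2.1)).edgeCount
  · exact (h.le_fcount_of_meets_doubledPath hG hH hI).2 hr
  · exact hGl.three_le_fcount (h.edges_subset_right hH hI) hr hpos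

theorem sparse_right (h : K2SubstOn G' G x y z v) (hG' : G'.Sparse 2) : G.Sparse 2 := by
  refine sparse_of_le_fcount fun H hH hpos => ?_
  by_cases hI : 0 < (H.inter (monoComplete Col.r {x, y, z, v})).edgeCount
  · have hU := h.two_le_fcount_union_monoComplete hG' hH
    have hI' := two_le_fcount_of_isSubgraph_monoComplete h.card_eq_four.le
      (inter_isSubgraph_right H _) hI
    have hsum := fcount_union_add_fcount_inter H (monoComplete Col.r {x, y, z, v})
    rw [fcount_monoComplete, h.card_eq_four, Nat.choose_two_right] at hsum
    omega
  · exact hG'.le_fcount (h.edges_subset_left hH hI) hpos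

theorem limited23_right (h : K2SubstOn G' G x y z v) (hG' : G'.Limited23) : G.Limited23 := by
  refine limited23_of_three_le_fcount fun H hH hr hpos => hG'.three_le_fcount (fun c => ?_) hr hpos
  cases c
  · exact (hH.2 Col.b).trans h.edges_b_subset
  · simp [hr]

theorem tight_iff (h : K2SubstOn G' G x y z v) : G.Tight 2 ↔ G'.Tight 2 := by
  rw [tight_iff_sparse_and_fcount_eq, tight_iff_sparse_and_fcount_eq, h.fcount_eq]
  exact and_congr_left' ⟨h.sparse_left, h.sparse_right⟩

end K2SubstOn

end BiGraph

/-- If `G` is obtained from `G'` by a `K₂ ⊔ K₂` substitution on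
`x, y, z`, then `G` is `(2,2)`-tight and `(2,3)`-limited if and only if `G'` is. -/
theorem K2K2_substitution_preserves_tight_limited
    {α : Type} [DecidableEq α] (G' G : BiGraph α) (x y z v : α)
    (hsub : BiGraph.K2SubstOn G' G x y z v) :
    (G.Tight 2 ∧ G.Limited23) ↔ (G'.Tight 2 ∧ G'.Limited23) := by
  constructor
  · rintro ⟨hT, hL⟩
    exact ⟨hsub.tight_iff.mp hT, hsub.limited23_left hT.1 hL⟩
  · rintro ⟨hT, hL⟩
    exact ⟨hsub.tight_iff.mpr hT, hsub.limited23_right hL⟩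
end
end

section
/- Consider the double-distance context (R³, d_xy, d_z). An algebraically generic double-distance framework (G,p) in (R³, d_xy, d_z) is minimally infinitesimally rigid if and only if the bar-joint framework (G_b, π_xy ∘ p) is minimally infinitesimally rigid in R² and the bar-joint framework (G_r, π_z ∘ p) is minimally infinitesimally rigid in R¹, where G_b and G_r are the spanning subgraphs of G formed by the blue and red edges respectively. -/
open scoped BigOperators

noncomputable section

/-- Points of `m`-dimensional Euclidean space. -/
abbrev Pt (m : ℕ) : Type := EuclideanSpace ℝ (Fin m)

/-- A symmetric separation function on `m`-dimensional space. -/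
def SymFun (m : ℕ) : Type := {g : Pt m → Pt m → ℝ // ∀ x y, g x y = g y x}

/-- The Euclidean distance as a symmetric separation function. -/
def euclD (m : ℕ) : SymFun m :=
  ⟨fun x y => dist x y, fun x y => dist_comm x y⟩

/-- The geodesic (great circle) distance on the unit sphere, `arccos⟨x,y⟩`. -/
def sphereGeoD : SymFun 3 :=
  ⟨fun x y => Real.arccos (∑ i : Fin 3, x i * y i), by
    intro x y
    dsimp only
    congr 1
    exact Finset.sum_congr rfl (fun i _ => mul_comm _ _)⟩

/-- The geodesic distance on the unit cylinder `x² + y² = 1`: unrolling the cylinder,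
the angular separation of the `xy`-parts is `arccos (x₀y₀ + x₁y₁)` (the minimum over
`k ∈ ℤ` of `|θ₁ - θ₂ + 2πk|`). -/
def cylGeoD : SymFun 3 :=
  ⟨fun x y => Real.sqrt ((Real.arccos (x 0 * y 0 + x 1 * y 1)) ^ 2 + (x 2 - y 2) ^ 2), by
    intro x y
    dsimp only
    have h1 : x 0 * y 0 + x 1 * y 1 = y 0 * x 0 + y 1 * x 1 := by ring
    have h2 : (x 2 - y 2) ^ 2 = (y 2 - x 2) ^ 2 := by ring
    rw [h1, h2]⟩

/-- The `ℓ_q` distance on the plane. -/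
def lqD (q : ℝ) : SymFun 2 :=
  ⟨fun x y => (|x 0 - y 0| ^ q + |x 1 - y 1| ^ q) ^ (1 / q), by
    intro x y
    dsimp only
    rw [abs_sub_comm (x 0) (y 0), abs_sub_comm (x 1) (y 1)]⟩

/-- The direction constraint `(y_v - y_w)² / (x_v - x_w)²` on the plane. -/
def dirD : SymFun 2 :=
  ⟨fun x y => (x 1 - y 1) ^ 2 / (x 0 - y 0) ^ 2, by
    intro x y
    dsimp only
    have h1 : (x 1 - y 1) ^ 2 = (y 1 - x 1) ^ 2 := by ring
    have h2 : (x 0 - y 0) ^ 2 = (y 0 - x 0) ^ 2 := by ring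
    rw [h1, h2]⟩

/-- The distance between the projections to the `xy`-plane, for points of `ℝ³`. -/
def dxyD : SymFun 3 :=
  ⟨fun x y => Real.sqrt ((x 0 - y 0) ^ 2 + (x 1 - y 1) ^ 2), by
    intro x y
    dsimp only
    have h1 : (x 0 - y 0) ^ 2 = (y 0 - x 0) ^ 2 := by ring
    have h2 : (x 1 - y 1) ^ 2 = (y 1 - x 1) ^ 2 := by ring
    rw [h1, h2]⟩

/-- The distance between the projections to the `z`-axis, for points of `ℝ³`. -/
def dzD : SymFun 3 :=
  ⟨fun x y => |x 2 - y 2|, fun x y => abs_sub_comm (x 2) (y 2)⟩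

variable {α : Type} [DecidableEq α]

/-- The constraint value of a separation function on an (unordered) edge, as a function
of the placement of all joints. -/
def edgeFun {m : ℕ} (g : SymFun m) (e : Sym2 α) (P : α → Pt m) : ℝ :=
  Sym2.lift ⟨fun v w => g.1 (P v) (P w), fun v w => g.2 (P v) (P w)⟩ e

section WithFintype

variable [Fintype α]

/-- The standard basis vector of the configuration space, in the coordinate `vj.2` of
the joint `vj.1`. -/
def coordVec {m : ℕ} (vj : α × Fin m) : α → Pt m :=
  Pi.single vj.1 (EuclideanSpace.single vj.2 1)

/-- The `(e, vj)` entry of a rigidity matrix: the derivative of the edge constraint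
function at the placement `P`, in the coordinate direction `vj`. -/
def edgeDeriv {m : ℕ} (g : SymFun m) (e : Sym2 α) (P : α → Pt m) (vj : α × Fin m) : ℝ :=
  fderiv ℝ (edgeFun g e) P (coordVec vj)

/-- The rigidity matrix of a bi-coloured framework, where blue edges impose the
constraint `gb` and red edges impose the constraint `gr`:
rows are the derivatives of the edge constraint functions. -/
def rigidityMatrix {m : ℕ} (G : BiGraph α) (gb gr : SymFun m) (P : α → Pt m) :
    Matrix ({e // e ∈ G.edges Col.b} ⊕ {e // e ∈ G.edges Col.r}) (α × Fin m) ℝ :=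
  Matrix.of fun rc vj =>
    Sum.elim (fun e : {e // e ∈ G.edges Col.b} => edgeDeriv gb e.1 P vj)
      (fun e : {e // e ∈ G.edges Col.r} => edgeDeriv gr e.1 P vj) rc

/-- The rigidity matrix of a bi-coloured framework on a surface: the first `|E|` rows
are the derivatives of the edge constraint functions and the last `|V|` rows form a
block diagonal matrix whose entries are given by the normal vector `nrm` at each joint. -/
def surfMatrix (G : BiGraph α) (gb gr : SymFun 3) (nrm : Pt 3 → Fin 3 → ℝ)
    (P : α → Pt 3) :
    Matrix (({e // e ∈ G.edges Col.b} ⊕ {e // e ∈ G.edges Col.r}) ⊕ {v // v ∈ G.verts})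
      (α × Fin 3) ℝ :=
  Matrix.of fun rc vj =>
    Sum.elim
      (Sum.elim (fun e : {e // e ∈ G.edges Col.b} => edgeDeriv gb e.1 P vj)
        (fun e : {e // e ∈ G.edges Col.r} => edgeDeriv gr e.1 P vj))
      (fun v : {v // v ∈ G.verts} => if vj.1 = v.1 then nrm (P v.1) vj.2 else 0) rc

end WithFintype

/-- An infinitesimal flex of the bi-coloured framework `(G, P)`: a velocity vector
annihilated by the derivative of every edge constraint function. -/
def IsFlex [Fintype α] {m : ℕ} (G : BiGraph α) (gb gr : SymFun m) (P u : α → Pt m) : Prop :=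
  (∀ e ∈ G.edges Col.b, fderiv ℝ (edgeFun gb e) P u = 0) ∧
  (∀ e ∈ G.edges Col.r, fderiv ℝ (edgeFun gr e) P u = 0)

/-- Infinitesimal rigidity: every infinitesimal flex of `(G, P)` is the restriction of
an infinitesimal flex of the complete bi-coloured framework `(K(V), P)`. -/
def InfRigid [Fintype α] {m : ℕ} (G : BiGraph α) (gb gr : SymFun m) (P : α → Pt m) : Prop :=
  ∀ u : α → Pt m, IsFlex G gb gr P u →
    ∃ u' : α → Pt m, (∀ v ∈ G.verts, u' v = u v) ∧
      IsFlex (BiGraph.complete G.verts) gb gr P u'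

/-- Minimal infinitesimal rigidity. -/
def MinInfRigid [Fintype α] {m : ℕ} (G : BiGraph α) (gb gr : SymFun m) (P : α → Pt m) : Prop :=
  InfRigid G gb gr P ∧ ∀ c, ∀ e ∈ G.edges c, ¬ InfRigid (G.deleteEdge c e) gb gr P

/-- Complete regularity relative to a class `Pl` of admissible placements: for every
subgraph `H` of the complete bi-coloured multigraph on the vertex set, the rank of the
rigidity matrix of `(H, P)` is maximal over all admissible placements of `H`. -/
def CompRegular [Fintype α] {m : ℕ} (G : BiGraph α) (gb gr : SymFun m)
    (Pl : BiGraph α → (α → Pt m) → Prop) (P : α → Pt m) : Prop :=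
  ∀ H : BiGraph α, H.verts ⊆ G.verts → ∀ Q : α → Pt m, Pl H Q →
    (rigidityMatrix H gb gr Q).rank ≤ (rigidityMatrix H gb gr P).rank

/-- A placement for a double-distance framework in the plane: the endpoints of each
edge are placed at distinct points. -/
def PlacementDD (G : BiGraph α) (P : α → Pt 2) : Prop :=
  ∀ c, ∀ e ∈ G.edges c, ∀ v w : α, e = s(v, w) → P v ≠ P w

/-- A placement for a direction-length framework in the plane: endpoints of edges are
distinct, and endpoints of (blue) direction edges have distinct first coordinates. -/
def PlacementDL (G : BiGraph α) (P : α → Pt 2) : Prop :=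
  PlacementDD G P ∧
  ∀ e ∈ G.edges Col.b, ∀ v w : α, e = s(v, w) → P v 0 ≠ P w 0

/-- An (uncoloured) multigraph on a finite vertex set: a simple graph given by a finite
set of unordered pairs of distinct vertices. -/
structure MGraph (α : Type) [DecidableEq α] : Type where
  verts : Finset α
  edges : Finset (Sym2 α)
  valid : ∀ e ∈ edges, ¬ e.IsDiag ∧ ∀ x ∈ e, x ∈ verts

namespace MGraph

variable {α : Type} [DecidableEq α]

/-- The complete graph on a vertex set. -/
def complete (Vs : Finset α) : MGraph α where
  verts := Vs
  edges := Vs.sym2.filter (fun e => ¬ e.IsDiag)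
  valid := by
    intro e he
    rw [Finset.mem_filter] at he
    exact ⟨he.2, fun x hx => Finset.mem_sym2_iff.mp he.1 x hx⟩

/-- Delete an edge. -/
def deleteEdge (G : MGraph α) (e₀ : Sym2 α) : MGraph α where
  verts := G.verts
  edges := G.edges.erase e₀
  valid := fun e he => G.valid e (Finset.mem_of_mem_erase he)

end MGraph

/-- The spanning monochrome subgraph of colour `c` of a bi-coloured multigraph. -/
def BiGraph.mono {α : Type} [DecidableEq α] (G : BiGraph α) (c : Col) : MGraph α where
  verts := G.verts
  edges := G.edges c
  valid := fun e he => G.valid c e he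

section MFrameworks

variable {α : Type} [DecidableEq α] [Fintype α] {m : ℕ}

/-- An infinitesimal flex of a bar-joint framework `(G, P)` in `ℝᵐ` whose edges impose
the constraint `g`. -/
def IsFlexM (G : MGraph α) (g : SymFun m) (P u : α → Pt m) : Prop :=
  ∀ e ∈ G.edges, fderiv ℝ (edgeFun g e) P u = 0

/-- Infinitesimal rigidity of a bar-joint framework: every infinitesimal flex is the
restriction of an infinitesimal flex of the complete framework. -/
def InfRigidM (G : MGraph α) (g : SymFun m) (P : α → Pt m) : Prop :=
  ∀ u : α → Pt m, IsFlexM G g P u →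
    ∃ u' : α → Pt m, (∀ v ∈ G.verts, u' v = u v) ∧
      IsFlexM (MGraph.complete G.verts) g P u'

/-- Minimal infinitesimal rigidity of a bar-joint framework. -/
def MinInfRigidM (G : MGraph α) (g : SymFun m) (P : α → Pt m) : Prop :=
  InfRigidM G g P ∧ ∀ e ∈ G.edges, ¬ InfRigidM (G.deleteEdge e) g P

end MFrameworks

/-- The projection of `ℝ³` onto the `xy`-plane. -/
def projXY (x : Pt 3) : Pt 2 := (WithLp.equiv 2 (Fin 2 → ℝ)).symm ![x 0, x 1]

/-- The projection of `ℝ³` onto the `z`-axis. -/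
def projZ (x : Pt 3) : Pt 1 := (WithLp.equiv 2 (Fin 1 → ℝ)).symm ![x 2]

/-!
Both separation functions factor through a linear projection: `d_xy` through `π_xy` and
`d_z` through `π_z`. Since composing with a surjective linear map does not change
differentiability, the derivative of every edge constraint factors through the same
projection, so a velocity field is an infinitesimal flex of `(G, p)` exactly when its
`xy`-part is a flex of `(G_b, π_xy ∘ p)` and its `z`-part is a flex of `(G_r, π_z ∘ p)`.
As `ℝ³ = ℝ² × ℝ`, velocities of the two parts can be chosen independently, so
infinitesimal rigidity, and then (deleting one edge of either colour) minimal
infinitesimal rigidity, splits into the two bar-joint conditions.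
-/

theorem fderiv_comp_of_surjective {𝕜 X Y Z : Type*} [NontriviallyNormedField 𝕜]
    [CompleteSpace 𝕜] [NormedAddCommGroup X] [NormedSpace 𝕜 X] [NormedAddCommGroup Y]
    [NormedSpace 𝕜 Y] [FiniteDimensional 𝕜 Y] [NormedAddCommGroup Z] [NormedSpace 𝕜 Z]
    (L : X →L[𝕜] Y) (hL : Function.Surjective L) (f : Y → Z) (x : X) :
    fderiv 𝕜 (f ∘ L) x = (fderiv 𝕜 f (L x)).comp L := by
  by_cases hf : DifferentiableAt 𝕜 f (L x)
  · exact (hf.hasFDerivAt.comp x L.hasFDerivAt).fderiv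
  obtain ⟨R, hLR⟩ := L.exists_rightInverse_of_surjective (LinearMap.range_eq_top.mpr hL)
  have hLR' : ∀ y, L (R y) = y := fun y => congr($hLR y)
  suffices ¬ DifferentiableAt 𝕜 (f ∘ L) x by
    rw [fderiv_zero_of_not_differentiableAt hf, fderiv_zero_of_not_differentiableAt this,
      ContinuousLinearMap.zero_comp]
  intro hfL
  -- `f` is recovered from `f ∘ L` by precomposing with an affine section of `L` through `x`
  have hsection : f = (f ∘ L) ∘ fun y => x + R (y - L x) := by
    funext y
    simp [hLR']
  refine hf (hsection ▸ DifferentiableAt.comp (L x) ?_ (by fun_prop))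
  simpa using hfL

def liftXYZ (a : Pt 2) (b : Pt 1) : Pt 3 := (WithLp.equiv 2 (Fin 3 → ℝ)).symm ![a 0, a 1, b 0]

@[simp]
theorem projXY_liftXYZ (a : Pt 2) (b : Pt 1) : projXY (liftXYZ a b) = a := by
  ext i; fin_cases i <;> rfl

@[simp]
theorem projZ_liftXYZ (a : Pt 2) (b : Pt 1) : projZ (liftXYZ a b) = b := by
  ext i; fin_cases i; rfl

@[simp]
theorem liftXYZ_projXY_projZ (x : Pt 3) : liftXYZ (projXY x) (projZ x) = x := by
  ext i; fin_cases i <;> rfl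

def projXYL : Pt 3 →L[ℝ] Pt 2 :=
  LinearMap.toContinuousLinearMap
    { toFun := projXY
      map_add' := fun x y => by ext i; fin_cases i <;> rfl
      map_smul' := fun c x => by ext i; fin_cases i <;> rfl }

def projZL : Pt 3 →L[ℝ] Pt 1 :=
  LinearMap.toContinuousLinearMap
    { toFun := projZ
      map_add' := fun x y => by ext i; fin_cases i; rfl
      map_smul' := fun c x => by ext i; fin_cases i; rfl }

theorem projXYL_surjective : Function.Surjective projXYL :=
  fun a => ⟨liftXYZ a 0, projXY_liftXYZ a 0⟩

theorem projZL_surjective : Function.Surjective projZL :=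
  fun b => ⟨liftXYZ 0 b, projZ_liftXYZ 0 b⟩

theorem dxyD_eq_dist (x y : Pt 3) : dxyD.1 x y = (euclD 2).1 (projXYL x) (projXYL y) := by
  change Real.sqrt _ = dist (projXY x) (projXY y)
  rw [EuclideanSpace.dist_eq]
  simp only [Fin.sum_univ_two, Real.dist_eq, sq_abs]
  rfl

theorem dzD_eq_dist (x y : Pt 3) : dzD.1 x y = (euclD 1).1 (projZL x) (projZL y) := by
  change |x 2 - y 2| = dist (projZ x) (projZ y)
  rw [EuclideanSpace.dist_eq]
  simp only [Fin.sum_univ_one, Real.dist_eq, sq_abs, Real.sqrt_sq_eq_abs]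
  rfl

theorem fderiv_edgeFun_of_factor {α : Type} [Fintype α] {m n : ℕ} (g : SymFun m)
    (h : SymFun n) (L : Pt n →L[ℝ] Pt m) (hL : Function.Surjective L)
    (hgh : ∀ x y, h.1 x y = g.1 (L x) (L y)) (e : Sym2 α) (P u : α → Pt n) :
    fderiv ℝ (edgeFun h e) P u =
      fderiv ℝ (edgeFun g e) (fun v => L (P v)) (fun v => L (u v)) := by
  let Lα : (α → Pt n) →L[ℝ] (α → Pt m) :=
    ContinuousLinearMap.pi fun v => L.comp (ContinuousLinearMap.proj v)
  have hLα : Function.Surjective Lα := fun Q => ⟨fun v => (hL (Q v)).choose,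
    funext fun v => (hL (Q v)).choose_spec⟩
  have hfactor : edgeFun h e = edgeFun g e ∘ Lα := by
    funext Q
    induction e using Sym2.ind with
    | _ v w => exact hgh (Q v) (Q w)
  rw [hfactor, fderiv_comp_of_surjective Lα hLα]
  rfl

theorem isFlexM_zero {α : Type} [DecidableEq α] {m : ℕ} (G : MGraph α) (g : SymFun m)
    (P : α → Pt m) :
    IsFlexM G g P 0 :=
  fun _ _ => map_zero _

theorem isFlex_dxyD_dzD_iff {α : Type} [DecidableEq α] [Fintype α] (G : BiGraph α)
    (P u : α → Pt 3) :
    IsFlex G dxyD dzD P u ↔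
      IsFlexM (G.mono Col.b) (euclD 2) (fun v => projXY (P v)) (fun v => projXY (u v)) ∧
      IsFlexM (G.mono Col.r) (euclD 1) (fun v => projZ (P v)) (fun v => projZ (u v)) := by
  simp only [IsFlex, IsFlexM, BiGraph.mono,
    fderiv_edgeFun_of_factor _ _ _ projXYL_surjective dxyD_eq_dist,
    fderiv_edgeFun_of_factor _ _ _ projZL_surjective dzD_eq_dist]
  rfl

theorem infRigid_dxyD_dzD_iff {α : Type} [DecidableEq α] [Fintype α] (G : BiGraph α)
    (P : α → Pt 3) :
    InfRigid G dxyD dzD P ↔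
      InfRigidM (G.mono Col.b) (euclD 2) (fun v => projXY (P v)) ∧
      InfRigidM (G.mono Col.r) (euclD 1) (fun v => projZ (P v)) := by
  have hcomplete : ∀ c, (BiGraph.complete G.verts).mono c = MGraph.complete G.verts :=
    fun _ => rfl
  simp only [InfRigid, InfRigidM, isFlex_dxyD_dzD_iff, hcomplete]
  constructor
  · intro h
    constructor
    · intro a ha
      obtain ⟨u', hu', hflex, -⟩ :=
        h (fun v => liftXYZ (a v) 0) (by simpa using ⟨ha, isFlexM_zero _ _ _⟩)
      exact ⟨fun v => projXY (u' v), fun v hv => by simp [hu' v hv], hflex⟩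
    · intro b hb
      obtain ⟨u', hu', -, hflex⟩ :=
        h (fun v => liftXYZ 0 (b v)) (by simpa using ⟨isFlexM_zero _ _ _, hb⟩)
      exact ⟨fun v => projZ (u' v), fun v hv => by simp [hu' v hv], hflex⟩
  · rintro ⟨hb, hr⟩ u ⟨hub, hur⟩
    obtain ⟨a', ha', hflexb⟩ := hb _ hub
    obtain ⟨b', hb', hflexr⟩ := hr _ hur
    exact ⟨fun v => liftXYZ (a' v) (b' v), fun v hv => by simp [ha' v hv, hb' v hv],
      by simp only [projXY_liftXYZ]; exact hflexb, by simp only [projZ_liftXYZ]; exact hflexr⟩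

theorem dxy_dz_rigidity_characterisation_general
    {α : Type} [DecidableEq α] [Fintype α] (G : BiGraph α) (P : α → Pt 3) :
    MinInfRigid G dxyD dzD P ↔
      (MinInfRigidM (G.mono Col.b) (euclD 2) (fun v => projXY (P v)) ∧
       MinInfRigidM (G.mono Col.r) (euclD 1) (fun v => projZ (P v))) := by
  -- `(G.deleteEdge c e).mono c` is `(G.mono c).deleteEdge e` and the other colour class is
  -- untouched, both definitionally, so `infRigid_dxyD_dzD_iff` applies to `G.deleteEdge c e` as is
  rw [MinInfRigid, MinInfRigidM, MinInfRigidM, infRigid_dxyD_dzD_iff]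
  constructor
  · rintro ⟨⟨hb, hr⟩, hmin⟩
    exact ⟨⟨hb, fun e he hdel => hmin .b e he ((infRigid_dxyD_dzD_iff _ P).2 ⟨hdel, hr⟩)⟩,
      ⟨hr, fun e he hdel => hmin .r e he ((infRigid_dxyD_dzD_iff _ P).2 ⟨hb, hdel⟩)⟩⟩
  · rintro ⟨⟨hb, hbmin⟩, ⟨hr, hrmin⟩⟩
    refine ⟨⟨hb, hr⟩, ?_⟩
    rintro (_ | _) e he hdel
    · exact hbmin e he ((infRigid_dxyD_dzD_iff _ P).1 hdel).1
    · exact hrmin e he ((infRigid_dxyD_dzD_iff _ P).1 hdel).2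

/-- In the double-distance context `(ℝ³, d_xy, d_z)`, an
algebraically generic double-distance framework `(G, P)` is minimally infinitesimally
rigid if and only if its `xy`-projection `(G_b, π_xy ∘ P)` is minimally
infinitesimally rigid in `ℝ²` and its `z`-axis projection `(G_r, π_z ∘ P)` is
minimally infinitesimally rigid in `ℝ¹`, where `G_b` and `G_r` are the spanning
subgraphs formed by the blue and the red edges. -/
theorem dxy_dz_rigidity_characterisation
    {α : Type} [DecidableEq α] [Fintype α] (G : BiGraph α) (P : α → Pt 3)
    (hplaceb : ∀ e ∈ G.edges Col.b, ∀ v w : α, e = s(v, w) → dxyD.1 (P v) (P w) ≠ 0)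
    (hplacer : ∀ e ∈ G.edges Col.r, ∀ v w : α, e = s(v, w) → dzD.1 (P v) (P w) ≠ 0)
    (hgen : AlgebraicIndependent ℚ
      (fun vj : {v // v ∈ G.verts} × Fin 3 => P vj.1.1 vj.2)) :
    MinInfRigid G dxyD dzD P ↔
      (MinInfRigidM (G.mono Col.b) (euclD 2) (fun v => projXY (P v)) ∧
       MinInfRigidM (G.mono Col.r) (euclD 1) (fun v => projZ (P v))) :=
  dxy_dz_rigidity_characterisation_general G P
end
end
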